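/- Let M = (L, μ0, Σ, δ) be an MDP and α a strategy such that M with strategy α is strongly synchronizing. Then there exists a state ℓ ∈ L that is reached with probability 1 under α, i.e., the probability (under the measure induced by μ0, α and δ on infinite plays) of the set of plays that visit ℓ at some step equals 1. -/

import Mathlib

/-! The probability of visiting `ℓ` at one of the steps `0, …, n` is nondecreasing in `n`, bounded
by `1`, and at least the mass `X_n(ℓ)` of `ℓ` at step `n`. Hence `‖X_n‖` never exceeds the largest of
the limits of these probabilities, and strong synchronization forces that limit to be `1`. -/

open Filter

namespace SyncMDP

/-- A history: an initial state followed by a list of (action, state) steps. -/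
structure Hist (L A : Type) where
  start : L
  steps : List (A × L)
deriving DecidableEq

variable {L A : Type}

/-- The last state of a history. -/
def Hist.last (h : Hist L A) : L := h.steps.foldl (fun _ p => p.2) h.start

/-- The length of a history. -/
def Hist.len (h : Hist L A) : ℕ := h.steps.length

/-- Extending a history by one action and one state. -/
def Hist.extend (h : Hist L A) (a : A) (l : L) : Hist L A := ⟨h.start, h.steps ++ [(a, l)]⟩

/-- A probability distribution on a finite type. -/
def IsDist {S : Type} [Fintype S] (d : S → ℝ) : Prop :=
  (∀ s, 0 ≤ d s) ∧ ∑ s, d s = 1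

/-- A probabilistic transition function. -/
def IsTrans [Fintype L] (δ : L → A → L → ℝ) : Prop := ∀ l a, IsDist (δ l a)

/-- A (randomized) strategy assigns a distribution over actions to every history. -/
def IsStrategy [Fintype A] (α : Hist L A → A → ℝ) : Prop :=
  ∀ h : Hist L A, (∀ a, 0 ≤ α h a) ∧ ∑ a, α h a = 1

/-- A pure strategy plays one action with probability one after every history. -/
def PureStrat (α : Hist L A → A → ℝ) : Prop := ∀ h, ∃ a, α h a = 1

/-- A blind strategy only depends on the length of the history. -/
def BlindStrat (α : Hist L A → A → ℝ) : Prop :=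
  ∀ h₁ h₂ : Hist L A, h₁.len = h₂.len → α h₁ = α h₂

/-- A memoryless strategy only depends on the last state of the history. -/
def Memoryless (α : Hist L A → A → ℝ) : Prop :=
  ∀ h₁ h₂ : Hist L A, h₁.last = h₂.last → α h₁ = α h₂

/-- Auxiliary product for the probability of a history: the first argument is the current
state, the second the history (prefix) read so far, the third the remaining steps. -/
def prAux (δ : L → A → L → ℝ) (α : Hist L A → A → ℝ) : L → Hist L A → List (A × L) → ℝ
  | _, _, [] => 1
  | cur, pre, (a, l) :: rest => α pre a * δ cur a l * prAux δ α l (pre.extend a l) rest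

/-- The probability `Pr^α(h)` of a history `h`. -/
def pr (μ0 : L → ℝ) (δ : L → A → L → ℝ) (α : Hist L A → A → ℝ) (h : Hist L A) : ℝ :=
  μ0 h.start * prAux δ α h.start ⟨h.start, []⟩ h.steps

variable (L A) in
/-- The finite set of all histories of length `n`. -/
def hists [Fintype L] [DecidableEq L] [Fintype A] [DecidableEq A] : ℕ → Finset (Hist L A)
  | 0 => Finset.univ.image fun l : L => ⟨l, []⟩
  | n + 1 => (hists n).biUnion fun h => Finset.univ.image fun p : A × L => h.extend p.1 p.2

variable [Fintype L] [DecidableEq L] [Fintype A] [DecidableEq A]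

/-- The outcome `X_n^α` : the distribution over states at step `n` under strategy `α`. -/
noncomputable def outcome (μ0 : L → ℝ) (δ : L → A → L → ℝ) (α : Hist L A → A → ℝ)
    (n : ℕ) (l : L) : ℝ :=
  ∑ h ∈ (hists L A n).filter (fun h => h.last = l), pr μ0 δ α h

/-- The norm `‖X‖ = max_{ℓ ∈ L} X(ℓ)` of a distribution on a (nonempty) finite type. -/
noncomputable def dnorm (X : L → ℝ) : ℝ := ⨆ l, X l

/-- Strongly synchronizing: `liminf_n ‖X_n^α‖ = 1`. -/
def StronglySync (μ0 : L → ℝ) (δ : L → A → L → ℝ) (α : Hist L A → A → ℝ) : Prop :=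
  liminf (fun n => dnorm (outcome μ0 δ α n)) atTop = 1

/-- Weakly synchronizing: `limsup_n ‖X_n^α‖ = 1`. -/
def WeaklySync (μ0 : L → ℝ) (δ : L → A → L → ℝ) (α : Hist L A → A → ℝ) : Prop :=
  limsup (fun n => dnorm (outcome μ0 δ α n)) atTop = 1

open Classical in
/-- `Post_σ(ℓ)`: the support of `δ(ℓ,σ)`. -/
noncomputable def post (δ : L → A → L → ℝ) (l : L) (a : A) : Finset L :=
  Finset.univ.filter fun l' => 0 < δ l a l'

/-- Transition function of the perfect-information subset construction. -/
noncomputable def deltaP (δ : L → A → L → ℝ) (s : Finset L) (f : L → A) : Finset L :=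
  s.biUnion fun l => post δ l (f l)

/-- Transition function of the blind subset construction. -/
noncomputable def deltaB (δ : L → A → L → ℝ) (s : Finset L) (a : A) : Finset L :=
  s.biUnion fun l => post δ l a

open Classical in
/-- The initial cell: the support of `μ0`. -/
noncomputable def initCell (μ0 : L → ℝ) : Finset L :=
  Finset.univ.filter fun l => 0 < μ0 l

/-- Reachability of a cell from the initial cell in the perfect-information
subset construction. -/
def ReachP (μ0 : L → ℝ) (δ : L → A → L → ℝ) (s : Finset L) : Prop :=
  Relation.ReflTransGen (fun t t' => ∃ f : L → A, deltaP δ t f = t') (initCell μ0) s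

/-- Reachability of a cell from the initial cell in the blind subset construction. -/
def ReachB (μ0 : L → ℝ) (δ : L → A → L → ℝ) (s : Finset L) : Prop :=
  Relation.ReflTransGen (fun t t' => ∃ a : A, deltaB δ t a = t') (initCell μ0) s

/-- Cyclic successor on `Fin d`. -/
def cyc {d : ℕ} (hd : 0 < d) (i : Fin d) : Fin d := ⟨((i : ℕ) + 1) % d, Nat.mod_lt _ hd⟩

/-- A recurrent cyclic set for the cycle `(s, act)` of length `d` of the
perfect-information subset construction. -/
def IsRCSP {d : ℕ} (hd : 0 < d) (δ : L → A → L → ℝ) (s : Fin d → Finset L)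
    (act : Fin d → L → A) (g : Fin d → Finset L) : Prop :=
  ∀ i : Fin d, (g i).Nonempty ∧ g i ⊆ s i ∧
    (g i).biUnion (fun l => post δ l (act i l)) = g (cyc hd i)

/-- A minimal recurrent cyclic set (perfect-information). -/
def IsMinRCSP {d : ℕ} (hd : 0 < d) (δ : L → A → L → ℝ) (s : Fin d → Finset L)
    (act : Fin d → L → A) (g : Fin d → Finset L) : Prop :=
  IsRCSP hd δ s act g ∧
    ∀ g' : Fin d → Finset L, IsRCSP hd δ s act g' → (∀ i, g' i ⊆ g i) → g' = g

/-- A recurrent cyclic set for the cycle `(s, act)` of length `d` of the blind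
subset construction. -/
def IsRCSB {d : ℕ} (hd : 0 < d) (δ : L → A → L → ℝ) (s : Fin d → Finset L)
    (act : Fin d → A) (g : Fin d → Finset L) : Prop :=
  ∀ i : Fin d, (g i).Nonempty ∧ g i ⊆ s i ∧
    (g i).biUnion (fun l => post δ l (act i)) = g (cyc hd i)

/-- A minimal recurrent cyclic set (blind). -/
def IsMinRCSB {d : ℕ} (hd : 0 < d) (δ : L → A → L → ℝ) (s : Fin d → Finset L)
    (act : Fin d → A) (g : Fin d → Finset L) : Prop :=
  IsRCSB hd δ s act g ∧
    ∀ g' : Fin d → Finset L, IsRCSB hd δ s act g' → (∀ i, g' i ⊆ g i) → g' = g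


/-- The list of states visited by a history. -/
def Hist.states (h : Hist L A) : List L := h.start :: h.steps.map Prod.snd

theorem IsDist.nonempty {S : Type} [Fintype S] {d : S → ℝ} (hd : IsDist d) : Nonempty S := by
  by_contra h
  rw [not_nonempty_iff] at h
  simpa using hd.2

theorem exists_tendsto_one_of_liminf_eq_one {ι : Type} [Finite ι] [Nonempty ι]
    {F : ι → ℕ → ℝ} (hmono : ∀ i, Monotone (F i)) (hle : ∀ i n, F i n ≤ 1)
    {g : ℕ → ℝ} (hg : ∀ n, g n ≤ ⨆ i, F i n) (hg_bdd : IsBoundedUnder (· ≥ ·) atTop g)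
    (hlim : liminf g atTop = 1) :
    ∃ i, Tendsto (F i) atTop (nhds 1) := by
  have hbdd : ∀ i, BddAbove (Set.range (F i)) := fun i => ⟨1, Set.forall_mem_range.2 (hle i)⟩
  obtain ⟨i₀, hi₀⟩ := Finite.exists_max fun i => ⨆ n, F i n
  have hg_le : ∀ n, g n ≤ ⨆ n, F i₀ n := fun n =>
    (hg n).trans <| ciSup_le fun i => (le_ciSup (hbdd i) n).trans (hi₀ i)
  have hsup : ⨆ n, F i₀ n = 1 := by
    refine le_antisymm (ciSup_le (hle i₀)) ?_
    rw [← hlim]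
    exact liminf_le_of_frequently_le (.of_forall hg_le) hg_bdd
  exact ⟨i₀, hsup ▸ tendsto_atTop_ciSup (hmono i₀) (hbdd i₀)⟩

section

variable {μ0 : L → ℝ} {δ : L → A → L → ℝ} {α : Hist L A → A → ℝ}

section
omit [DecidableEq L] [DecidableEq A]

section
omit [Fintype L] [Fintype A]

theorem Hist.extend_inj {h h' : Hist L A} {a a' : A} {l l' : L} :
    h.extend a l = h'.extend a' l' ↔ h = h' ∧ a = a' ∧ l = l' := by
  obtain ⟨s, xs⟩ := h
  obtain ⟨s', xs'⟩ := h'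
  simp only [Hist.extend, Hist.mk.injEq, List.append_singleton_inj, Prod.mk.injEq, and_assoc]

theorem Hist.states_extend (h : Hist L A) (a : A) (l : L) :
    (h.extend a l).states = h.states ++ [l] := by
  simp [Hist.extend, Hist.states]

theorem Hist.last_mem_states (h : Hist L A) : h.last ∈ h.states := by
  obtain ⟨s, xs⟩ := h
  induction xs using List.reverseRecOn with
  | nil => simp [Hist.last, Hist.states]
  | append_singleton xs p _ => simp [Hist.last, Hist.states]

theorem prAux_append_singleton (xs : List (A × L)) (cur : L) (pre : Hist L A) (a : A) (l : L) :
    prAux δ α cur pre (xs ++ [(a, l)]) =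
      prAux δ α cur pre xs * α ⟨pre.start, pre.steps ++ xs⟩ a *
        δ (xs.foldl (fun _ p => p.2) cur) a l := by
  induction xs generalizing cur pre with
  | nil => simp [prAux]
  | cons p rest ih =>
    obtain ⟨b, m⟩ := p
    simp only [List.cons_append, prAux, ih, Hist.extend, List.append_assoc, List.nil_append,
      List.foldl_cons]
    ring

theorem pr_extend (h : Hist L A) (a : A) (l : L) :
    pr μ0 δ α (h.extend a l) = pr μ0 δ α h * (α h a * δ h.last a l) := by
  simp only [pr, Hist.extend, prAux_append_singleton, List.nil_append, Hist.last]
  ring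

end

theorem prAux_nonneg (hδ : IsTrans δ) (hα : IsStrategy α) (xs : List (A × L)) (cur : L)
    (pre : Hist L A) : 0 ≤ prAux δ α cur pre xs := by
  induction xs generalizing cur pre with
  | nil => exact zero_le_one
  | cons p rest ih =>
    exact mul_nonneg (mul_nonneg ((hα pre).1 p.1) ((hδ cur p.1).1 p.2)) (ih _ _)

theorem pr_nonneg (hμ0 : IsDist μ0) (hδ : IsTrans δ) (hα : IsStrategy α) (h : Hist L A) :
    0 ≤ pr μ0 δ α h :=
  mul_nonneg (hμ0.1 _) (prAux_nonneg hδ hα _ _ _)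

theorem sum_pr_extend (hδ : IsTrans δ) (hα : IsStrategy α) (h : Hist L A) :
    ∑ p : A × L, pr μ0 δ α (h.extend p.1 p.2) = pr μ0 δ α h := by
  simp only [Fintype.sum_prod_type, pr_extend, ← Finset.mul_sum, (hδ _ _).2, mul_one, (hα h).2]

end

theorem sum_hists_succ {M : Type} [AddCommMonoid M] (n : ℕ) (g : Hist L A → M) :
    ∑ h ∈ hists L A (n + 1), g h = ∑ h ∈ hists L A n, ∑ p : A × L, g (h.extend p.1 p.2) := by
  rw [hists, Finset.sum_biUnion]
  · exact Finset.sum_congr rfl fun h _ => Finset.sum_image fun p _ q _ hpq =>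
      Prod.ext (Hist.extend_inj.1 hpq).2.1 (Hist.extend_inj.1 hpq).2.2
  · intro h _ h' _ hne
    simp only [Function.onFun, Finset.disjoint_left, Finset.mem_image, Finset.mem_univ, true_and]
    rintro _ ⟨p, rfl⟩ ⟨q, hq⟩
    exact hne (Hist.extend_inj.1 hq).1.symm

theorem sum_pr_hists (hμ0 : IsDist μ0) (hδ : IsTrans δ) (hα : IsStrategy α) (n : ℕ) :
    ∑ h ∈ hists L A n, pr μ0 δ α h = 1 := by
  induction n with
  | zero =>
    rw [hists, Finset.sum_image fun _ _ _ _ he => by simpa using he]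
    simpa [pr, prAux] using hμ0.2
  | succ n ih =>
    rw [sum_hists_succ, ← ih]
    exact Finset.sum_congr rfl fun h _ => sum_pr_extend hδ hα h

variable (μ0 δ α) in
noncomputable def visitProb (ℓ : L) (n : ℕ) : ℝ :=
  ∑ h ∈ (hists L A n).filter (fun h => ℓ ∈ h.states), pr μ0 δ α h

theorem visitProb_le_one (hμ0 : IsDist μ0) (hδ : IsTrans δ) (hα : IsStrategy α) (ℓ : L)
    (n : ℕ) : visitProb μ0 δ α ℓ n ≤ 1 :=
  sum_pr_hists hμ0 hδ hα n ▸ Finset.sum_le_sum_of_subset_of_nonneg (Finset.filter_subset _ _)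
    fun h _ _ => pr_nonneg hμ0 hδ hα h

theorem visitProb_monotone (hμ0 : IsDist μ0) (hδ : IsTrans δ) (hα : IsStrategy α) (ℓ : L) :
    Monotone (visitProb μ0 δ α ℓ) := by
  refine monotone_nat_of_le_succ fun n => ?_
  simp only [visitProb, Finset.sum_filter, sum_hists_succ]
  refine Finset.sum_le_sum fun h _ => ?_
  split_ifs with hℓ
  · rw [← sum_pr_extend hδ hα h]
    refine Finset.sum_le_sum fun p _ => ?_
    rw [if_pos (h.states_extend p.1 p.2 ▸ List.mem_append_left _ hℓ)]
  · exact Finset.sum_nonneg fun p _ => by split_ifs <;> simp [pr_nonneg hμ0 hδ hα]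

theorem outcome_le_visitProb (hμ0 : IsDist μ0) (hδ : IsTrans δ) (hα : IsStrategy α) (n : ℕ)
    (ℓ : L) : outcome μ0 δ α n ℓ ≤ visitProb μ0 δ α ℓ n :=
  Finset.sum_le_sum_of_subset_of_nonneg
    (Finset.monotone_filter_right _ fun h _ hl => hl ▸ h.last_mem_states)
    fun h _ _ => pr_nonneg hμ0 hδ hα h

theorem dnorm_outcome_nonneg (hμ0 : IsDist μ0) (hδ : IsTrans δ) (hα : IsStrategy α) (n : ℕ) :
    0 ≤ dnorm (outcome μ0 δ α n) :=
  Real.iSup_nonneg fun _ => Finset.sum_nonneg fun h _ => pr_nonneg hμ0 hδ hα h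

end

/-- If `M` with strategy `α` is strongly synchronizing, then some state
`ℓ` is reached with probability 1 under `α`: the probability (in the measure induced on
infinite plays, obtained as the limit of the probabilities of the sets of histories of
length `n` that visit `ℓ`) of the set of plays visiting `ℓ` at some step equals `1`. -/
theorem strongly_sync_reach_prob_one
    (μ0 : L → ℝ) (δ : L → A → L → ℝ)
    (hμ0 : IsDist μ0) (hδ : IsTrans δ)
    (α : Hist L A → A → ℝ) (hα : IsStrategy α)
    (hsync : StronglySync μ0 δ α) :
    ∃ ℓ : L, Filter.Tendsto
      (fun n => ∑ h ∈ (hists L A n).filter (fun h => ℓ ∈ h.states), pr μ0 δ α h)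
      atTop (nhds 1) :=
  have := hμ0.nonempty
  exists_tendsto_one_of_liminf_eq_one (visitProb_monotone hμ0 hδ hα) (visitProb_le_one hμ0 hδ hα)
    (fun n => ciSup_mono (Finite.bddAbove_range _) (outcome_le_visitProb hμ0 hδ hα n))
    (isBoundedUnder_of ⟨0, dnorm_outcome_nonneg hμ0 hδ hα⟩) hsync

end SyncMDP
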